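/- The Moser spindle is a unit distance graph on 7 points in the plane whose independence number is 2; consequently any set A ⊆ ℝ² avoiding unit distances satisfies: every point of the plane lies in at most 2 of the 7 translates of A by the vertices of the Moser spindle. -/
import Mathlib

open Finset

attribute [local instance] Classical.propDecidable

private def spE : Fin 7 → Fin 7 → Bool := fun i j =>
  decide ((i, j) ∈ [((0:Fin 7),(1:Fin 7)),(0,2),(0,4),(0,5),(1,2),(1,3),(2,3),(4,5),(4,6),(5,6),(3,6),
    (1,0),(2,0),(4,0),(5,0),(2,1),(3,1),(3,2),(5,4),(6,4),(6,5),(6,3)])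

set_option maxRecDepth 8000 in
private lemma spE_card (s : Finset (Fin 7)) (h : ∀ i ∈ s, ∀ j ∈ s, spE i j = false) :
    s.card ≤ 2 := by
  revert h; revert s; decide

set_option maxHeartbeats 1000000 in
/-- The Moser spindle is a unit distance graph on 7 points of the plane
whose independence number is 2; consequently, for any set `A` avoiding unit distances,
every point of the plane lies in at most 2 of the 7 translates of `A` by its vertices. -/
theorem stmt_6 (u₁ v₁ u₂ v₂ : EuclideanSpace ℝ (Fin 2))
    (hu₁ : ‖u₁‖ = 1) (hv₁ : ‖v₁‖ = 1) (hu₂ : ‖u₂‖ = 1) (hv₂ : ‖v₂‖ = 1)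
    (h₁ : ‖u₁ - v₁‖ = 1) (h₂ : ‖u₂ - v₂‖ = 1)
    (htip : ‖(u₁ + v₁) - (u₂ + v₂)‖ = 1)
    (M : Fin 7 → EuclideanSpace ℝ (Fin 2))
    (hM : M = ![0, u₁, v₁, u₁ + v₁, u₂, v₂, u₂ + v₂])
    (hinj : Function.Injective M) :
    IsGreatest {k : ℕ | ∃ s : Finset (Fin 7), s.card = k ∧
        ∀ i ∈ s, ∀ j ∈ s, dist (M i) (M j) ≠ 1} 2 ∧
    ∀ A : Set (EuclideanSpace ℝ (Fin 2)),
      (∀ p ∈ A, ∀ q ∈ A, dist p q ≠ 1) →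
      ∀ p : EuclideanSpace ℝ (Fin 2),
        (Finset.univ.filter (fun i : Fin 7 => p - M i ∈ A)).card ≤ 2 := by
  subst hM
  have d1 : dist (0 : EuclideanSpace ℝ (Fin 2)) u₁ = 1 := by
    rw [dist_eq_norm, zero_sub, norm_neg]; exact hu₁
  have d2 : dist (0 : EuclideanSpace ℝ (Fin 2)) v₁ = 1 := by
    rw [dist_eq_norm, zero_sub, norm_neg]; exact hv₁
  have d3 : dist (0 : EuclideanSpace ℝ (Fin 2)) u₂ = 1 := by
    rw [dist_eq_norm, zero_sub, norm_neg]; exact hu₂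
  have d4 : dist (0 : EuclideanSpace ℝ (Fin 2)) v₂ = 1 := by
    rw [dist_eq_norm, zero_sub, norm_neg]; exact hv₂
  have d5 : dist u₁ v₁ = 1 := by rw [dist_eq_norm]; exact h₁
  have d6 : dist u₂ v₂ = 1 := by rw [dist_eq_norm]; exact h₂
  have d7 : dist u₁ (u₁ + v₁) = 1 := by
    rw [dist_eq_norm, show u₁ - (u₁ + v₁) = -v₁ from by abel, norm_neg]; exact hv₁
  have d8 : dist v₁ (u₁ + v₁) = 1 := by
    rw [dist_eq_norm, show v₁ - (u₁ + v₁) = -u₁ from by abel, norm_neg]; exact hu₁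
  have d9 : dist u₂ (u₂ + v₂) = 1 := by
    rw [dist_eq_norm, show u₂ - (u₂ + v₂) = -v₂ from by abel, norm_neg]; exact hv₂
  have d10 : dist v₂ (u₂ + v₂) = 1 := by
    rw [dist_eq_norm, show v₂ - (u₂ + v₂) = -u₂ from by abel, norm_neg]; exact hu₂
  have d11 : dist (u₁ + v₁) (u₂ + v₂) = 1 := by rw [dist_eq_norm]; exact htip
  have key : ∀ i j : Fin 7, spE i j = true →
      dist (![0, u₁, v₁, u₁ + v₁, u₂, v₂, u₂ + v₂] i)
           (![0, u₁, v₁, u₁ + v₁, u₂, v₂, u₂ + v₂] j) = 1 := by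
    intro i j h
    fin_cases i <;> fin_cases j <;>
      first
        | (exfalso; revert h; decide)
        | exact d1 | exact d2 | exact d3 | exact d4 | exact d5 | exact d6
        | exact d7 | exact d8 | exact d9 | exact d10 | exact d11
        | (rw [dist_comm]
           first
             | exact d1 | exact d2 | exact d3 | exact d4 | exact d5 | exact d6
             | exact d7 | exact d8 | exact d9 | exact d10 | exact d11)
  have hdiag : ‖u₁ + v₁‖ ≠ 1 := by
    intro heq
    have e1 := norm_sub_sq_real u₁ v₁
    have e2 := norm_add_sq_real u₁ v₁
    rw [hu₁, hv₁, h₁] at e1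
    rw [hu₁, hv₁, heq] at e2
    norm_num at e1 e2
    linarith
  have ub : ∀ s : Finset (Fin 7),
      (∀ i ∈ s, ∀ j ∈ s, dist (![0, u₁, v₁, u₁ + v₁, u₂, v₂, u₂ + v₂] i)
        (![0, u₁, v₁, u₁ + v₁, u₂, v₂, u₂ + v₂] j) ≠ 1) → s.card ≤ 2 := by
    intro s hs
    refine spE_card s ?_
    intro i hi j hj
    by_contra h
    rw [Bool.not_eq_false] at h
    exact hs i hi j hj (key i j h)
  refine ⟨⟨⟨{0, 3}, by decide, ?_⟩, ?_⟩, ?_⟩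
  · intro i hi j hj
    simp only [mem_insert, mem_singleton] at hi hj
    rcases hi with rfl | rfl <;> rcases hj with rfl | rfl
    · show dist (0 : EuclideanSpace ℝ (Fin 2)) 0 ≠ 1
      simp
    · show dist (0 : EuclideanSpace ℝ (Fin 2)) (u₁ + v₁) ≠ 1
      rw [dist_eq_norm, zero_sub, norm_neg]; exact hdiag
    · show dist (u₁ + v₁) (0 : EuclideanSpace ℝ (Fin 2)) ≠ 1
      rw [dist_eq_norm, sub_zero]; exact hdiag
    · show dist (u₁ + v₁) (u₁ + v₁) ≠ 1
      simp
  · rintro k ⟨s, rfl, hs⟩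
    exact ub s hs
  · intro A hA p
    apply ub
    intro i hi j hj
    simp only [mem_filter] at hi hj
    have := hA _ hi.2 _ hj.2
    rwa [dist_sub_left] at this
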